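/- arXiv:2504.09342 — 3 statements merged into one kernel-verified Lean document; each statement's English description precedes it below -/
import Mathlib

section
/- For every real x̄ ≥ 0, the supremum over γ ∈ [0,∞) of f(γ) = x̄·γ/(1+γ) − log(1+γ) equals φ(max(x̄,1)) = max(x̄,1) − 1 − log(max(x̄,1)); moreover the supremum is attained, at γ = x̄ − 1 when x̄ ≥ 1 and at γ = 0 when x̄ ≤ 1. -/
open Set Real

/-!
Write `a = 1 + γ`, so that `f(γ) = x - x / a - log a`. For `x > 0`, the inequality
`1 - t⁻¹ ≤ log t` at `t = a / x` gives `f(γ) ≤ x - 1 - log x = φ(x)` for every `γ > -1`, with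
equality at `a = x`. For `x ≤ 1` and `γ ≥ 0` the same inequality at `t = a` gives
`f(γ) ≤ γ / a = 1 - a⁻¹ ≤ log a`, i.e. `f(γ) ≤ 0 = φ(1)`, with equality at `γ = 0`.
-/

namespace SNR

noncomputable def phi (x : ℝ) : ℝ := x - 1 - log x

noncomputable def gain (x γ : ℝ) : ℝ := x * γ / (1 + γ) - log (1 + γ)

theorem gain_le_phi {x γ : ℝ} (hx : 0 < x) (hγ : -1 < γ) : gain x γ ≤ phi x := by
  have ha : 0 < 1 + γ := by linarith
  have hlog : 1 - x / (1 + γ) ≤ log (1 + γ) - log x := by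
    simpa only [inv_div, log_div ha.ne' hx.ne'] using
      one_sub_inv_le_log_of_pos (div_pos ha hx)
  have hsplit : x * γ / (1 + γ) = x - x / (1 + γ) := by
    field_simp
    ring
  rw [gain, phi, hsplit]
  linarith

theorem gain_nonpos {x γ : ℝ} (hx : x ≤ 1) (hγ : 0 ≤ γ) : gain x γ ≤ 0 := by
  have ha : 0 < 1 + γ := by linarith
  have hlog : 1 - (1 + γ)⁻¹ ≤ log (1 + γ) := one_sub_inv_le_log_of_pos ha
  calc gain x γ ≤ γ / (1 + γ) - log (1 + γ) := by
        rw [gain]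
        gcongr
        nlinarith
    _ = 1 - (1 + γ)⁻¹ - log (1 + γ) := by
        field_simp
        ring
    _ ≤ 0 := by linarith

theorem gain_sub_one {x : ℝ} (hx : x ≠ 0) : gain x (x - 1) = phi x := by
  rw [gain, phi, add_sub_cancel, mul_div_cancel_left₀ _ hx]

theorem gain_zero (x : ℝ) : gain x 0 = 0 := by
  simp [gain]

theorem phi_one : phi 1 = 0 := by
  simp [phi]

theorem isGreatest_gain (x : ℝ) : IsGreatest (gain x '' Ici 0) (phi (max x 1)) := by
  rcases le_total 1 x with h1x | hx1
  · have hx : 0 < x := by linarith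
    rw [max_eq_left h1x]
    refine ⟨⟨x - 1, sub_nonneg.mpr h1x, gain_sub_one hx.ne'⟩, ?_⟩
    rintro _ ⟨γ, hγ, rfl⟩
    exact gain_le_phi hx (by linarith [mem_Ici.mp hγ])
  · rw [max_eq_right hx1, phi_one]
    refine ⟨⟨0, self_mem_Ici, gain_zero x⟩, ?_⟩
    rintro _ ⟨γ, hγ, rfl⟩
    exact gain_nonpos hx1 hγ

end SNR

open SNR in
theorem snr_maximization_general (x : ℝ) :
    IsGreatest ((fun γ : ℝ => x * γ / (1 + γ) - Real.log (1 + γ)) '' Set.Ici 0)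
      (max x 1 - 1 - Real.log (max x 1)) ∧
    (1 ≤ x →
      x * (x - 1) / (1 + (x - 1)) - Real.log (1 + (x - 1))
        = max x 1 - 1 - Real.log (max x 1)) ∧
    (x ≤ 1 →
      x * 0 / (1 + 0) - Real.log (1 + 0) = max x 1 - 1 - Real.log (max x 1)) := by
  refine ⟨isGreatest_gain x, fun h1x => ?_, fun hx1 => ?_⟩
  · change gain x (x - 1) = phi (max x 1)
    rw [max_eq_left h1x]
    exact gain_sub_one (by linarith)
  · change gain x 0 = phi (max x 1)
    rw [max_eq_right hx1, phi_one]
    exact gain_zero x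

/-- The supremum over `γ ∈ [0,∞)` of
`f(γ) = x̄·γ/(1+γ) − log(1+γ)` equals `φ(max(x̄,1)) = max(x̄,1) − 1 − log(max(x̄,1))`,
and it is attained at `γ = x̄ − 1` when `x̄ ≥ 1` and at `γ = 0` when `x̄ ≤ 1`. -/
theorem snr_maximization (x : ℝ) (hx : 0 ≤ x) :
    IsGreatest ((fun γ : ℝ => x * γ / (1 + γ) - Real.log (1 + γ)) '' Set.Ici 0)
      (max x 1 - 1 - Real.log (max x 1)) ∧
    (1 ≤ x →
      x * (x - 1) / (1 + (x - 1)) - Real.log (1 + (x - 1))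
        = max x 1 - 1 - Real.log (max x 1)) ∧
    (x ≤ 1 →
      x * 0 / (1 + 0) - Real.log (1 + 0) = max x 1 - 1 - Real.log (max x 1)) :=
  snr_maximization_general x
end

section
/- Fix constants 0 < α₀ < β₀ < 1 and γ > 0, and reals α, β with 0 ≤ α < β ≤ 1, α ≤ β₀ and β ≥ α₀. Let (E_n)_{n∈ℕ} be i.i.d. random variables, each exponentially distributed with mean 1. For each N define X^{(N)}_n = (1+γ)·E_n if ⌊α₀N⌋ ≤ n < ⌊β₀N⌋ and X^{(N)}_n = E_n otherwise, and for N large enough that ⌊αN⌋ < ⌊βN⌋ set X̄_N = (1/(⌊βN⌋−⌊αN⌋)) Σ_{n=⌊αN⌋}^{⌊βN⌋−1} X^{(N)}_n. Then X̄_N converges almost surely to Z(α,β) = 1 + γ·(min(β₀,β) − max(α₀,α))/(β − α) as N → ∞. -/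
/-!
The observation window `[⌊αN⌋, ⌊βN⌋)` and the boosted window `[⌊α₀N⌋, ⌊β₀N⌋)` meet in
`[⌊max α α₀ · N⌋, ⌊min β β₀ · N⌋)`, so the sum of the observations is a plain sum of the `E n`
over the first window plus `γ` times a plain sum over the intersection. Every such sum is a
difference of two partial sums `∑_{n < ⌊cN⌋} E n`, and by the strong law of large numbers these
are `c N + o(N)` almost surely; the window length is `(β - α) N + o(N)`.
-/

open Finset Real MeasureTheory Filter Topology ProbabilityTheory

-- The right-hand side is in the shape of `integral_rpow_mul_exp_neg_mul_Ioi`.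
lemma exponentialPDFReal_mul_self (r x : ℝ) :
    exponentialPDFReal r x * x =
      (Set.Ioi 0).indicator (fun t => r * (t ^ ((2 : ℝ) - 1) * exp (-(r * t)))) x := by
  rcases lt_trichotomy x 0 with hx | rfl | hx
  · simp [exponentialPDFReal, gammaPDFReal, hx.not_ge, hx.not_gt]
  · simp
  · rw [Set.indicator_of_mem (Set.mem_Ioi.2 hx)]
    norm_num [exponentialPDFReal, gammaPDFReal, hx.le]
    ring

lemma integral_exponentialPDFReal_mul_self {r : ℝ} (hr : 0 < r) :
    ∫ x, exponentialPDFReal r x * x = r⁻¹ := by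
  simp_rw [exponentialPDFReal_mul_self, integral_indicator measurableSet_Ioi, integral_const_mul,
    integral_rpow_mul_exp_neg_mul_Ioi two_pos hr, Gamma_two]
  rw [one_div, mul_one, Real.rpow_two, sq, ← mul_assoc, mul_inv_cancel₀ hr.ne', one_mul]

lemma measurable_exponentialPDF (r : ℝ) : Measurable (exponentialPDF r) :=
  (measurable_exponentialPDFReal r).ennreal_ofReal

lemma integrable_id_expMeasure {r : ℝ} (hr : 0 < r) : Integrable id (expMeasure r) := by
  change Integrable id (volume.withDensity (exponentialPDF r))
  rw [integrable_withDensity_iff_integrable_smul'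
    (measurable_exponentialPDF r) (ae_of_all _ fun _ => ENNReal.ofReal_lt_top)]
  simp only [exponentialPDF, ENNReal.toReal_ofReal (exponentialPDFReal_nonneg hr _), id_eq,
    smul_eq_mul]
  refine Integrable.of_integral_ne_zero ?_
  rw [integral_exponentialPDFReal_mul_self hr]
  positivity

lemma integral_id_expMeasure {r : ℝ} (hr : 0 < r) : ∫ x, x ∂expMeasure r = r⁻¹ := by
  change ∫ x, x ∂volume.withDensity (exponentialPDF r) = r⁻¹
  rw [integral_withDensity_eq_integral_toReal_smul
    (measurable_exponentialPDF r) (ae_of_all _ fun _ => ENNReal.ofReal_lt_top)]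
  simp only [exponentialPDF, ENNReal.toReal_ofReal (exponentialPDFReal_nonneg hr _), smul_eq_mul]
  exact integral_exponentialPDFReal_mul_self hr

section CesaroWindows

variable {x : ℕ → ℝ} {m : ℝ}

lemma tendsto_sum_range_floor_mul_div
    (hx : Tendsto (fun n : ℕ => (∑ i ∈ range n, x i) / n) atTop (𝓝 m)) {c : ℝ} (hc : 0 ≤ c) :
    Tendsto (fun N : ℕ => (∑ i ∈ range ⌊c * N⌋₊, x i) / N) atTop (𝓝 (c * m)) := by
  rcases hc.eq_or_lt with rfl | hc
  · simp
  have hfloor : Tendsto (fun N : ℕ => ⌊c * N⌋₊) atTop atTop := tendsto_nat_floor_mul_atTop c hc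
  have hratio : Tendsto (fun N : ℕ => (⌊c * N⌋₊ : ℝ) / N) atTop (𝓝 c) :=
    (tendsto_nat_floor_mul_div_atTop hc.le).comp tendsto_natCast_atTop_atTop
  refine (hratio.mul (hx.comp hfloor)).congr' ?_
  filter_upwards [hfloor.eventually_gt_atTop 0] with N hN
  have : (⌊c * N⌋₊ : ℝ) ≠ 0 := by positivity
  simp only [Function.comp_apply]
  field_simp

lemma tendsto_sum_Ico_floor_mul_div
    (hx : Tendsto (fun n : ℕ => (∑ i ∈ range n, x i) / n) atTop (𝓝 m)) {a b : ℝ} (ha : 0 ≤ a)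
    (hab : a ≤ b) :
    Tendsto (fun N : ℕ => (∑ i ∈ Ico ⌊a * N⌋₊ ⌊b * N⌋₊, x i) / N) atTop (𝓝 ((b - a) * m)) := by
  rw [sub_mul]
  refine ((tendsto_sum_range_floor_mul_div hx (ha.trans hab)).sub
    (tendsto_sum_range_floor_mul_div hx ha)).congr fun N => ?_
  rw [sum_Ico_eq_sub _ (Nat.floor_mono (by gcongr)), sub_div]

lemma tendsto_floor_mul_sub_floor_mul_div {a b : ℝ} (ha : 0 ≤ a) (hab : a ≤ b) :
    Tendsto (fun N : ℕ => ((⌊b * N⌋₊ - ⌊a * N⌋₊ : ℕ) : ℝ) / N) atTop (𝓝 (b - a)) := by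
  have hone : Tendsto (fun n : ℕ => (∑ _i ∈ range n, (1 : ℝ)) / n) atTop (𝓝 1) := by
    refine tendsto_const_nhds.congr' ?_
    filter_upwards [eventually_gt_atTop 0] with n hn
    simp [hn.ne']
  simpa using tendsto_sum_Ico_floor_mul_div hone ha hab

end CesaroWindows

lemma sum_Ico_ite_one_add_mul (x : ℕ → ℝ) (γ : ℝ) (a b c d : ℕ) :
    ∑ i ∈ Ico a b, (if c ≤ i ∧ i < d then (1 + γ) * x i else x i) =
      ∑ i ∈ Ico a b, x i + γ * ∑ i ∈ Ico (max a c) (min b d), x i := by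
  have hsplit : ∀ i, (if c ≤ i ∧ i < d then (1 + γ) * x i else x i) =
      x i + if i ∈ Ico c d then γ * x i else 0 := by
    intro i
    simp only [mem_Ico]
    split_ifs <;> ring
  simp_rw [hsplit, sum_add_distrib, sum_ite_mem, Ico_inter_Ico, mul_sum]

theorem tendsto_interval_average {x : ℕ → ℝ} {m : ℝ}
    (hx : Tendsto (fun n : ℕ => (∑ i ∈ range n, x i) / n) atTop (𝓝 m))
    (γ : ℝ) {α₀ β₀ α β : ℝ} (h₀ : α₀ ≤ β₀) (hα : 0 ≤ α) (hαβ : α < β) (hαβ₀ : α ≤ β₀)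
    (hβα₀ : α₀ ≤ β) :
    Tendsto
      (fun N : ℕ =>
        (∑ n ∈ Ico ⌊α * N⌋₊ ⌊β * N⌋₊,
            (if ⌊α₀ * N⌋₊ ≤ n ∧ n < ⌊β₀ * N⌋₊ then (1 + γ) * x n else x n)) /
          ((⌊β * N⌋₊ - ⌊α * N⌋₊ : ℕ) : ℝ))
      atTop (𝓝 ((1 + γ * (min β₀ β - max α₀ α) / (β - α)) * m)) := by
  have hoverlap : max α α₀ ≤ min β β₀ := max_le (le_min hαβ.le hαβ₀) (le_min hβα₀ h₀)
  have hoverlap_nonneg : 0 ≤ max α α₀ := hα.trans (le_max_left _ _)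
  have hfloor_max (N : ℕ) : ⌊max α α₀ * N⌋₊ = max ⌊α * N⌋₊ ⌊α₀ * N⌋₊ := by
    rw [max_mul_of_nonneg _ _ N.cast_nonneg, Nat.floor_mono.map_max]
  have hfloor_min (N : ℕ) : ⌊min β β₀ * N⌋₊ = min ⌊β * N⌋₊ ⌊β₀ * N⌋₊ := by
    rw [min_mul_of_nonneg _ _ N.cast_nonneg, Nat.floor_mono.map_min]
  have hnum : Tendsto
      (fun N : ℕ => (∑ n ∈ Ico ⌊α * N⌋₊ ⌊β * N⌋₊,
          (if ⌊α₀ * N⌋₊ ≤ n ∧ n < ⌊β₀ * N⌋₊ then (1 + γ) * x n else x n)) / N)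
      atTop (𝓝 ((β - α) * m + γ * ((min β β₀ - max α α₀) * m))) := by
    refine ((tendsto_sum_Ico_floor_mul_div hx hα hαβ.le).add
      ((tendsto_sum_Ico_floor_mul_div hx hoverlap_nonneg hoverlap).const_mul γ)).congr fun N => ?_
    rw [sum_Ico_ite_one_add_mul, hfloor_max, hfloor_min, add_div, mul_div_assoc]
  have hden := tendsto_floor_mul_sub_floor_mul_div hα hαβ.le
  have hβα : β - α ≠ 0 := (sub_pos.2 hαβ).ne'
  convert (hnum.div hden hβα).congr' ?_ using 2
  · rw [min_comm β₀, max_comm α₀]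
    field_simp
  · filter_upwards [eventually_gt_atTop 0] with N hN
    exact div_div_div_cancel_right₀ (by positivity) _ _

theorem interval_average_limit_general
    {Ω : Type*} [MeasurableSpace Ω] (P : Measure Ω)
    (α₀ β₀ γ : ℝ) (h1 : α₀ < β₀)
    (α β : ℝ) (hα : 0 ≤ α) (hαβ : α < β)
    (hαβ₀ : α ≤ β₀) (hβα₀ : α₀ ≤ β)
    (E : ℕ → Ω → ℝ)
    (hmeas : ∀ n, Measurable (E n))
    (hindep : ProbabilityTheory.iIndepFun E P)
    (hdist : ∀ n, Measure.map (E n) P = ProbabilityTheory.expMeasure 1) :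
    ∀ᵐ ω ∂P, Filter.Tendsto
      (fun N : ℕ =>
        (∑ n ∈ Finset.Ico ⌊α * N⌋₊ ⌊β * N⌋₊,
            (if ⌊α₀ * N⌋₊ ≤ n ∧ n < ⌊β₀ * N⌋₊ then (1 + γ) * E n ω else E n ω)) /
          ((⌊β * N⌋₊ - ⌊α * N⌋₊ : ℕ) : ℝ))
      Filter.atTop
      (nhds (1 + γ * (min β₀ β - max α₀ α) / (β - α))) := by
  have hexp (n : ℕ) : IdentDistrib (E n) id P (expMeasure 1) :=
    ⟨(hmeas n).aemeasurable, aemeasurable_id, by rw [hdist n, Measure.map_id]⟩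
  have hint : Integrable (E 0) P := (hexp 0).integrable_iff.2 (integrable_id_expMeasure one_pos)
  have hmean : P[E 0] = 1 :=
    (hexp 0).integral_eq.trans ((integral_id_expMeasure one_pos).trans inv_one)
  have hslln := strong_law_ae_real E hint (fun i j hij => hindep.indepFun hij)
    (fun i => (hexp i).trans (hexp 0).symm)
  filter_upwards [hslln] with ω hω
  rw [hmean] at hω
  simpa only [mul_one] using tendsto_interval_average hω γ h1.le hα hαβ hαβ₀ hβα₀

/-- Strong law for interval averages: with i.i.d. unit-mean exponential
noise scaled by `1+γ` on `[⌊α₀N⌋, ⌊β₀N⌋)`, the average of the observations over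
`[⌊αN⌋, ⌊βN⌋)` converges almost surely to
`Z(α,β) = 1 + γ·(min(β₀,β) − max(α₀,α))/(β − α)`. -/
theorem interval_average_limit
    {Ω : Type*} [MeasurableSpace Ω] (P : Measure Ω) [IsProbabilityMeasure P]
    (α₀ β₀ γ : ℝ) (h0 : 0 < α₀) (h1 : α₀ < β₀) (h2 : β₀ < 1) (hγ : 0 < γ)
    (α β : ℝ) (hα : 0 ≤ α) (hαβ : α < β) (hβ : β ≤ 1)
    (hαβ₀ : α ≤ β₀) (hβα₀ : α₀ ≤ β)
    (E : ℕ → Ω → ℝ)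
    (hmeas : ∀ n, Measurable (E n))
    (hindep : ProbabilityTheory.iIndepFun E P)
    (hdist : ∀ n, Measure.map (E n) P = ProbabilityTheory.expMeasure 1) :
    ∀ᵐ ω ∂P, Filter.Tendsto
      (fun N : ℕ =>
        (∑ n ∈ Finset.Ico ⌊α * N⌋₊ ⌊β * N⌋₊,
            (if ⌊α₀ * N⌋₊ ≤ n ∧ n < ⌊β₀ * N⌋₊ then (1 + γ) * E n ω else E n ω)) /
          ((⌊β * N⌋₊ - ⌊α * N⌋₊ : ℕ) : ℝ))
      Filter.atTop
      (nhds (1 + γ * (min β₀ β - max α₀ α) / (β - α))) :=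
  interval_average_limit_general P α₀ β₀ γ h1 α β hα hαβ hαβ₀ hβα₀ E hmeas hindep hdist
end

section
/- Let c > 0, δ > 0, x* ∈ ℝ, and x ∈ ℝ with |x − x*| ≤ 2δ. Let f and g be real-valued functions defined at the three points x − δ, x, and x + δ. Assume: (i) for any two of these points u < v with v ≤ x*, f(v) − f(u) ≥ c·(v − u); (ii) for any two of these points u < v with u ≥ x*, f(u) − f(v) ≥ c·(v − u); and (iii) |g(y) − f(y)| < c·δ/2 for each y ∈ {x − δ, x, x + δ}. Then every maximizer x̂ of g over the three points {x − δ, x, x + δ} satisfies |x̂ − x*| ≤ δ. -/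
/-!
If the maximizer `x̂` of `g` lay more than `δ` to the left of `x*`, then `|x − x*| ≤ 2δ` forces
its right neighbour `x̂ + δ` to be a grid point still left of `x*`. There `f` is larger by at least
`cδ`, which is more than the `cδ/2 + cδ/2` that the approximation error of `g` can absorb, so
`g (x̂ + δ) > g x̂`: a contradiction. The case of `x̂` right of `x* + δ` is symmetric.
-/

lemma lt_of_abs_sub_lt_of_two_mul_le_sub {α : Type*} {f g : α → ℝ} {u v : α} {ε : ℝ}
    (hgap : 2 * ε ≤ f v - f u) (hu : |g u - f u| < ε) (hv : |g v - f v| < ε) : g u < g v := by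
  rw [abs_lt] at hu hv
  linarith

section Grid

variable {x δ xstar y : ℝ}

lemma add_mem_grid (hx : |x - xstar| ≤ 2 * δ) (hy : y ∈ ({x - δ, x, x + δ} : Set ℝ))
    (hleft : y < xstar - δ) : y + δ ∈ ({x - δ, x, x + δ} : Set ℝ) := by
  rw [abs_le] at hx
  rcases hy with rfl | rfl | rfl
  · simp
  · simp
  · linarith

lemma sub_mem_grid (hx : |x - xstar| ≤ 2 * δ) (hy : y ∈ ({x - δ, x, x + δ} : Set ℝ))
    (hright : xstar + δ < y) : y - δ ∈ ({x - δ, x, x + δ} : Set ℝ) := by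
  rw [abs_le] at hx
  rcases hy with rfl | rfl | rfl
  · linarith
  · simp
  · simp

end Grid

theorem boundary_tracking_step_general
    (c δ xstar x : ℝ) (hδ : 0 < δ)
    (hx : |x - xstar| ≤ 2 * δ)
    (f g : ℝ → ℝ)
    (hup : ∀ u ∈ ({x - δ, x, x + δ} : Set ℝ), ∀ v ∈ ({x - δ, x, x + δ} : Set ℝ),
      u < v → v ≤ xstar → c * (v - u) ≤ f v - f u)
    (hdown : ∀ u ∈ ({x - δ, x, x + δ} : Set ℝ), ∀ v ∈ ({x - δ, x, x + δ} : Set ℝ),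
      u < v → xstar ≤ u → c * (v - u) ≤ f u - f v)
    (happrox : ∀ y ∈ ({x - δ, x, x + δ} : Set ℝ), |g y - f y| < c * δ / 2) :
    ∀ xhat ∈ ({x - δ, x, x + δ} : Set ℝ),
      (∀ y ∈ ({x - δ, x, x + δ} : Set ℝ), g y ≤ g xhat) →
      |xhat - xstar| ≤ δ := by
  intro xhat hxhat hmax
  rw [abs_le]
  constructor <;> by_contra! hfar
  · have hnext := add_mem_grid hx hxhat (by linarith)
    have hrise := hup _ hxhat _ hnext (by linarith) (by linarith)
    refine (hmax _ hnext).not_gt (lt_of_abs_sub_lt_of_two_mul_le_sub (f := f) ?_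
      (happrox _ hxhat) (happrox _ hnext))
    linarith
  · have hprev := sub_mem_grid hx hxhat (by linarith)
    have hfall := hdown _ hprev _ hxhat (by linarith) (by linarith)
    refine (hmax _ hprev).not_gt (lt_of_abs_sub_lt_of_two_mul_le_sub (f := f) ?_
      (happrox _ hxhat) (happrox _ hprev))
    linarith

/-- One-step boundary tracking: if `f` has a triangular maximum at `x*`
with constant `c` on the three grid points `{x−δ, x, x+δ}`, `|x − x*| ≤ 2δ`, and `g`
approximates `f` to within `c·δ/2` on these points, then any maximizer of `g` over the
three points is within `δ` of `x*`. -/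
theorem boundary_tracking_step
    (c δ xstar x : ℝ) (hc : 0 < c) (hδ : 0 < δ)
    (hx : |x - xstar| ≤ 2 * δ)
    (f g : ℝ → ℝ)
    (hup : ∀ u ∈ ({x - δ, x, x + δ} : Set ℝ), ∀ v ∈ ({x - δ, x, x + δ} : Set ℝ),
      u < v → v ≤ xstar → c * (v - u) ≤ f v - f u)
    (hdown : ∀ u ∈ ({x - δ, x, x + δ} : Set ℝ), ∀ v ∈ ({x - δ, x, x + δ} : Set ℝ),
      u < v → xstar ≤ u → c * (v - u) ≤ f u - f v)
    (happrox : ∀ y ∈ ({x - δ, x, x + δ} : Set ℝ), |g y - f y| < c * δ / 2) :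
    ∀ xhat ∈ ({x - δ, x, x + δ} : Set ℝ),
      (∀ y ∈ ({x - δ, x, x + δ} : Set ℝ), g y ≤ g xhat) →
      |xhat - xstar| ≤ δ :=
  boundary_tracking_step_general c δ xstar x hδ hx f g hup hdown happrox
end
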